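/- arXiv:1104.0452 — 5 statements merged into one kernel-verified Lean document; each statement's English description precedes it below -/
import Mathlib

section
/- Let n ≥ 1, let a₁, …, a_r be integers and K₁, …, K_r nonzero integers. If the value Σ_{i=1}^{r} (a_i + a)^n / K_i (as a rational number) is independent of the integer a, i.e. equals Σ_{i=1}^{r} a_i^n / K_i for all a ∈ ℤ, then Σ_{i=1}^{r} a_i^t / K_i = 0 for all t with 0 ≤ t ≤ n−1. -/
open Finset Polynomial

theorem stmt1 (n r : ℕ) (hn : 1 ≤ n) (a : Fin r → ℤ) (K : Fin r → ℤ)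
    (hK : ∀ i, K i ≠ 0)
    (h : ∀ x : ℤ, ∑ i, ((a i + x : ℤ) : ℚ) ^ n / (K i : ℚ)
        = ∑ i, ((a i : ℤ) : ℚ) ^ n / (K i : ℚ)) :
    ∀ t : ℕ, t ≤ n - 1 → ∑ i, ((a i : ℤ) : ℚ) ^ t / (K i : ℚ) = 0 := by
  set P : ℚ[X] :=
    (∑ i, Polynomial.C ((K i : ℚ))⁻¹ * (Polynomial.X + Polynomial.C ((a i : ℤ) : ℚ)) ^ n)
      - Polynomial.C (∑ i, ((a i : ℤ) : ℚ) ^ n / (K i : ℚ)) with hP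
  have heval : ∀ x : ℤ, P.eval (x : ℚ) = 0 := by
    intro x
    have := h x
    simp only [hP, eval_sub, eval_finset_sum, eval_mul, eval_C, eval_pow, eval_add, eval_X]
    rw [sub_eq_zero]
    rw [← this]
    refine Finset.sum_congr rfl fun i _ => ?_
    push_cast
    ring
  have hPz : P = 0 := by
    refine Polynomial.eq_zero_of_infinite_isRoot P ?_
    exact Set.infinite_of_injective_forall_mem (f := fun m : ℤ => (m : ℚ))
      (fun x y hxy => by simpa using hxy) heval
  intro t ht
  have htn : t < n := lt_of_le_of_lt ht (Nat.sub_lt hn one_pos)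
  have hc := congrArg (fun p : ℚ[X] => p.coeff (n - t)) hPz
  simp only [hP, coeff_zero, coeff_sub, finset_sum_coeff, coeff_C_mul] at hc
  have hnt : n - t ≠ 0 := Nat.sub_ne_zero_of_lt htn
  rw [Polynomial.coeff_C, if_neg hnt] at hc
  have hcoef : ∀ i : Fin r,
      ((Polynomial.X + Polynomial.C ((a i : ℤ) : ℚ)) ^ n).coeff (n - t)
        = ((a i : ℤ) : ℚ) ^ t * (n.choose t : ℚ) := by
    intro i
    rw [Polynomial.coeff_X_add_C_pow]
    rw [Nat.sub_sub_self htn.le, Nat.choose_symm htn.le]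
  simp only [hcoef] at hc
  have hchoose : (n.choose t : ℚ) ≠ 0 := by
    exact_mod_cast Nat.choose_pos htn.le |>.ne'
  have : (∑ i, ((a i : ℤ) : ℚ) ^ t / (K i : ℚ)) * (n.choose t : ℚ) = 0 := by
    rw [sub_zero] at hc
    rw [Finset.sum_mul, ← hc]
    refine Finset.sum_congr rfl fun i _ => ?_
    field_simp
  exact (mul_eq_zero.mp this).resolve_right hchoose
end

section
/- Let n ≥ 1, a₁, …, a_r ∈ ℤ, K₁, …, K_r ∈ ℤ \ {0}, with Σ_i a_i^t / K_i = 0 for t = 0, …, n−1. If some value s occurs exactly once among a₁, …, a_r (i.e. the a_i are 'somewhere injective' at s), then r ≥ n+1. -/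
open Finset Polynomial

/-!
If the moments `∑ᵢ wᵢ xᵢ^t` vanish for all `t < r`, then `∑ᵢ wᵢ p(xᵢ) = 0` for every polynomial
`p` of degree `< r`. Taking for `p` the nodal polynomial of all points except the single
occurrence `x_{i₀}` isolates the term `w_{i₀} p(x_{i₀})` with `p(x_{i₀}) ≠ 0`, so `w_{i₀} = 0`.
With `wᵢ = 1/Kᵢ ≠ 0` this is impossible once `r ≤ n`.
-/

variable {ι F : Type*} [Fintype ι] [Field F]

theorem sum_mul_eval_eq_zero_of_moments {w x : ι → F} {d : ℕ}
    (hmom : ∀ t < d, ∑ i, w i * x i ^ t = 0) {p : F[X]} (hp : p.natDegree < d) :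
    ∑ i, w i * p.eval (x i) = 0 := by
  simp_rw [eval_eq_sum_range' hp, mul_sum]
  rw [sum_comm]
  refine sum_eq_zero fun t ht => ?_
  simp_rw [mul_left_comm (w _)]
  rw [← mul_sum, hmom t (mem_range.mp ht), mul_zero]

theorem weight_eq_zero_of_moments [DecidableEq ι] {w x : ι → F} {i₀ : ι}
    (hx : ∀ j ≠ i₀, x j ≠ x i₀) (hmom : ∀ t < Fintype.card ι, ∑ i, w i * x i ^ t = 0) :
    w i₀ = 0 := by
  set p := Lagrange.nodal (univ.erase i₀) x
  have hdeg : p.natDegree < Fintype.card ι := by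
    rw [Lagrange.natDegree_nodal, card_erase_of_mem (mem_univ i₀), card_univ]
    exact Nat.sub_lt (Fintype.card_pos_iff.mpr ⟨i₀⟩) one_pos
  have hvanish : ∀ j ≠ i₀, p.eval (x j) = 0 := fun j hj =>
    Lagrange.eval_nodal_at_node (mem_erase.mpr ⟨hj, mem_univ j⟩)
  have hnonzero : p.eval (x i₀) ≠ 0 :=
    Lagrange.eval_nodal_not_at_node fun j hj => (hx j (ne_of_mem_erase hj)).symm
  have hsum := sum_mul_eval_eq_zero_of_moments hmom hdeg
  rw [sum_eq_single i₀ (fun j _ hj => by rw [hvanish j hj, mul_zero]) (by simp)] at hsum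
  exact (mul_eq_zero.mp hsum).resolve_right hnonzero

theorem stmt5_general (n r : ℕ) (a : Fin r → ℤ) (K : Fin r → ℤ)
    (hK : ∀ i, K i ≠ 0)
    (h : ∀ t : ℕ, t ≤ n - 1 → ∑ i, ((a i : ℤ) : ℚ) ^ t / (K i : ℚ) = 0)
    (hs : ∃ s : ℤ, (Finset.univ.filter (fun i => a i = s)).card = 1) :
    r ≥ n + 1 := by
  by_contra! hrn
  obtain ⟨s, hcard⟩ := hs
  obtain ⟨i₀, hi₀⟩ := card_eq_one.mp hcard
  have hunique : ∀ j, a j = s ↔ j = i₀ := fun j => by simpa using Finset.ext_iff.mp hi₀ j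
  have hx : ∀ j ≠ i₀, (a j : ℚ) ≠ a i₀ := fun j hj => by
    rw [Ne, Int.cast_inj, (hunique i₀).mpr rfl, hunique]
    exact hj
  have hmom : ∀ t < Fintype.card (Fin r), ∑ i, (K i : ℚ)⁻¹ * (a i : ℚ) ^ t = 0 := by
    intro t ht
    rw [Fintype.card_fin] at ht
    simpa only [div_eq_inv_mul] using h t (by omega)
  exact hK i₀ (by exact_mod_cast inv_eq_zero.mp (weight_eq_zero_of_moments hx hmom))

theorem stmt5 (n r : ℕ) (hn : 1 ≤ n) (a : Fin r → ℤ) (K : Fin r → ℤ)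
    (hK : ∀ i, K i ≠ 0)
    (h : ∀ t : ℕ, t ≤ n - 1 → ∑ i, ((a i : ℤ) : ℚ) ^ t / (K i : ℚ) = 0)
    (hs : ∃ s : ℤ, (Finset.univ.filter (fun i => a i = s)).card = 1) :
    r ≥ n + 1 :=
  stmt5_general n r a K hK h hs
end

section
/- Let n ≥ 1 and suppose r = n+1, with a₁, …, a_{n+1} ∈ ℤ, K₁, …, K_{n+1} ∈ ℤ \ {0}, and Σ_i a_i^t / K_i = 0 for t = 0, …, n−1. Then exactly one of the following holds: (a) the a_i are pairwise distinct and Σ_i a_i^n / K_i ≠ 0; (b) no value occurs exactly once among the a_i and Σ_i a_i^n / K_i = 0. -/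
/-!
Group the indices by the value of `a`: each power sum `∑ aᵢᵗ / Kᵢ` becomes `∑ₛ Aₛ sᵗ` over the
`l` distinct values `s`, with `Aₛ = ∑_{aᵢ = s} 1 / Kᵢ`. If the first `l` power sums vanish, the
Vandermonde matrix of the distinct values kills every `Aₛ`, hence every power sum, and a value
taken exactly once would give `Aₛ = 1 / Kᵢ ≠ 0`. If `a` is not injective then `l ≤ n` and this
gives (b); if `a` is injective then `l = n + 1`, so the `n`-th power sum cannot vanish as well,
which gives (a).
-/

open Finset

theorem Finset.eq_zero_of_forall_sum_mul_pow_eq_zero {α R : Type*} [CommRing R] [IsDomain R]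
    {S : Finset α} {f c : α → R} (hf : Set.InjOn f S)
    (h : ∀ t < #S, ∑ s ∈ S, c s * f s ^ t = 0) : ∀ s ∈ S, c s = 0 := by
  let e := S.equivFin
  have hinj : Function.Injective (fun k => f (e.symm k)) := fun k l hkl =>
    e.symm.injective (Subtype.ext (hf (e.symm k).2 (e.symm l).2 hkl))
  have hzero := Matrix.eq_zero_of_forall_pow_sum_mul_pow_eq_zero (v := fun k => c (e.symm k)) hinj
    fun t => by
      rw [← h t t.2, ← S.sum_coe_sort]
      exact e.symm.sum_comp fun s => c s * f s ^ (t : ℕ)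
  intro s hs
  simpa using congrFun hzero (e ⟨s, hs⟩)

section FiberWeight

variable {ι α R : Type*} [Fintype ι] [DecidableEq α]

def fiberWeight [AddCommMonoid R] (x : ι → α) (w : ι → R) (s : α) : R :=
  ∑ i ∈ univ.filter (fun i => x i = s), w i

theorem sum_mul_pow_eq_sum_fiberWeight [CommSemiring R] (x : ι → α) (w : ι → R) (v : α → R)
    (t : ℕ) : ∑ i, w i * v (x i) ^ t = ∑ s ∈ univ.image x, fiberWeight x w s * v s ^ t := by
  rw [← sum_fiberwise_of_maps_to (g := x) fun i _ => mem_image_of_mem x (mem_univ i)]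
  refine sum_congr rfl fun s _ => ?_
  rw [fiberWeight, sum_mul]
  exact sum_congr rfl fun i hi => by rw [(mem_filter.mp hi).2]

theorem fiberWeight_eq_zero_of_forall_sum_mul_pow_eq_zero [CommRing R] [IsDomain R]
    {x : ι → α} {w : ι → R} {v : α → R} (hv : Function.Injective v) {m : ℕ}
    (hm : #(univ.image x) ≤ m) (h : ∀ t < m, ∑ i, w i * v (x i) ^ t = 0) (s : α) :
    fiberWeight x w s = 0 := by
  by_cases hs : s ∈ univ.image x
  · refine eq_zero_of_forall_sum_mul_pow_eq_zero hv.injOn (fun t ht => ?_) s hs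
    rw [← sum_mul_pow_eq_sum_fiberWeight]
    exact h t (ht.trans_le hm)
  · refine sum_eq_zero fun i hi => absurd ?_ hs
    exact (mem_filter.mp hi).2 ▸ mem_image_of_mem x (mem_univ i)

theorem card_filter_ne_one_of_fiberWeight_eq_zero [AddCommMonoid R] {x : ι → α} {w : ι → R}
    (hw : ∀ i, w i ≠ 0) {s : α} (h : fiberWeight x w s = 0) :
    #(univ.filter (fun i => x i = s)) ≠ 1 := by
  intro hcard
  obtain ⟨i, hi⟩ := card_eq_one.mp hcard
  rw [fiberWeight, hi, sum_singleton] at h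
  exact hw i h

end FiberWeight

theorem stmt7_general (n : ℕ) (a : Fin (n + 1) → ℤ) (K : Fin (n + 1) → ℤ)
    (hK : ∀ i, K i ≠ 0)
    (h : ∀ t : ℕ, t ≤ n - 1 → ∑ i, ((a i : ℤ) : ℚ) ^ t / (K i : ℚ) = 0) :
    Xor'
      (Function.Injective a ∧ ∑ i, ((a i : ℤ) : ℚ) ^ n / (K i : ℚ) ≠ 0)
      ((∀ s : ℤ, (Finset.univ.filter (fun i => a i = s)).card ≠ 1) ∧
        ∑ i, ((a i : ℤ) : ℚ) ^ n / (K i : ℚ) = 0) := by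
  set w : Fin (n + 1) → ℚ := fun i => (K i : ℚ)⁻¹
  have hw : ∀ i, w i ≠ 0 := fun i => inv_ne_zero (Int.cast_ne_zero.mpr (hK i))
  have hsum : ∀ t, ∑ i, ((a i : ℤ) : ℚ) ^ t / (K i : ℚ) = ∑ i, w i * ((a i : ℤ) : ℚ) ^ t :=
    fun t => sum_congr rfl fun i _ => div_eq_inv_mul _ _
  simp only [hsum] at h ⊢
  have hvanish := fun m => fiberWeight_eq_zero_of_forall_sum_mul_pow_eq_zero
    (x := a) (w := w) Int.cast_injective (m := m)
  by_cases hinj : Function.Injective a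
  · have hsingle : #(univ.filter (fun i => a i = a 0)) = 1 :=
      card_eq_one.mpr ⟨0, by ext i; simp [hinj.eq_iff]⟩
    have hSn : ∑ i, w i * ((a i : ℤ) : ℚ) ^ n ≠ 0 := fun hn => by
      have hall : ∀ t < n + 1, ∑ i, w i * ((a i : ℤ) : ℚ) ^ t = 0 := fun t ht => by
        rcases (Nat.lt_succ_iff.mp ht).lt_or_eq with ht | rfl
        exacts [h t (Nat.le_sub_one_of_lt ht), hn]
      have hle : #(univ.image a) ≤ n + 1 := by simpa using card_image_le (s := univ) (f := a)
      exact card_filter_ne_one_of_fiberWeight_eq_zero hw (hvanish (n + 1) hle hall (a 0)) hsingle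
    exact Or.inl ⟨⟨hinj, hSn⟩, fun hb => hb.1 (a 0) hsingle⟩
  · have hcard : #(univ.image a) ≤ n := by
      have hne : #(univ.image a) ≠ #(univ : Finset (Fin (n + 1))) := fun heq =>
        hinj (Set.injOn_univ.mp (by simpa using card_image_iff.mp heq))
      have hle := card_image_le (s := univ) (f := a)
      simp only [card_univ, Fintype.card_fin] at hne hle
      omega
    have hA := hvanish n hcard fun t ht => h t (Nat.le_sub_one_of_lt ht)
    refine Or.inr ⟨⟨fun s => card_filter_ne_one_of_fiberWeight_eq_zero hw (hA s), ?_⟩,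
      fun ha => hinj ha.1⟩
    rw [sum_mul_pow_eq_sum_fiberWeight]
    simp [hA]

theorem stmt7 (n : ℕ) (hn : 1 ≤ n) (a : Fin (n + 1) → ℤ) (K : Fin (n + 1) → ℤ)
    (hK : ∀ i, K i ≠ 0)
    (h : ∀ t : ℕ, t ≤ n - 1 → ∑ i, ((a i : ℤ) : ℚ) ^ t / (K i : ℚ) = 0) :
    Xor'
      (Function.Injective a ∧ ∑ i, ((a i : ℤ) : ℚ) ^ n / (K i : ℚ) ≠ 0)
      ((∀ s : ℤ, (Finset.univ.filter (fun i => a i = s)).card ≠ 1) ∧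
        ∑ i, ((a i : ℤ) : ℚ) ^ n / (K i : ℚ) = 0) :=
  stmt7_general n a K hK h
end

section
/- Let n ≥ 1 and r = n+1, with a₁, …, a_{n+1} ∈ ℤ, K₁, …, K_{n+1} ∈ ℤ \ {0}, satisfying Σ_i a_i^t / K_i = 0 for t = 0, …, n−1. If some value occurs exactly once among a₁, …, a_{n+1}, then the a_i are pairwise distinct. -/
open Finset Polynomial

theorem stmt8 (n : ℕ) (hn : 1 ≤ n) (a : Fin (n + 1) → ℤ) (K : Fin (n + 1) → ℤ)
    (hK : ∀ i, K i ≠ 0)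
    (h : ∀ t : ℕ, t ≤ n - 1 → ∑ i, ((a i : ℤ) : ℚ) ^ t / (K i : ℚ) = 0)
    (hs : ∃ s : ℤ, (Finset.univ.filter (fun i => a i = s)).card = 1) :
    Function.Injective a := by
  by_contra hinj
  obtain ⟨s, hs1⟩ := hs
  obtain ⟨i₀, hi₀⟩ := Finset.card_eq_one.mp hs1
  have hai₀ : a i₀ = s := by
    have : i₀ ∈ Finset.univ.filter (fun i => a i = s) := hi₀ ▸ Finset.mem_singleton_self i₀
    simpa using this
  have huniq : ∀ i, a i = s → i = i₀ := by
    intro i hi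
    have : i ∈ Finset.univ.filter (fun i => a i = s) := by simpa using hi
    rw [hi₀] at this
    simpa using this
  -- not injective gives two indices with equal values
  rw [Function.not_injective_iff] at hinj
  obtain ⟨p, q, hpq, hne⟩ := hinj
  set V : Finset ℤ := (Finset.univ.image a).erase s with hV
  have hVcard : V.card ≤ n - 1 := by
    have himg : (Finset.univ.image a) = ((Finset.univ.erase q).image a) := by
      apply Finset.Subset.antisymm
      · intro x hx
        simp only [Finset.mem_image] at hx ⊢
        obtain ⟨i, _, hi⟩ := hx
        by_cases hiq : i = q
        · exact ⟨p, Finset.mem_erase.mpr ⟨hne, Finset.mem_univ p⟩, by rw [hpq, ← hiq, hi]⟩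
        · exact ⟨i, Finset.mem_erase.mpr ⟨hiq, Finset.mem_univ i⟩, hi⟩
      · exact Finset.image_subset_image (Finset.erase_subset _ _)
    have h1 : (Finset.univ.image a).card ≤ n := by
      rw [himg]
      calc ((Finset.univ.erase q).image a).card ≤ (Finset.univ.erase q).card :=
            Finset.card_image_le
        _ = n := by simp
    have hsmem : s ∈ Finset.univ.image a := by
      exact Finset.mem_image.mpr ⟨i₀, Finset.mem_univ _, hai₀⟩
    have hVc : V.card = (Finset.univ.image a).card - 1 := by
      rw [hV]; exact Finset.card_erase_of_mem hsmem
    omega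
  set P : Polynomial ℚ := ∏ v ∈ V, (X - C (v : ℚ)) with hP
  have hdeg : P.natDegree < n := by
    have : P.natDegree ≤ ∑ v ∈ V, (X - C (v : ℚ)).natDegree :=
      Polynomial.natDegree_prod_le _ _
    have h2 : ∑ v ∈ V, (X - C (v : ℚ)).natDegree = V.card := by
      calc ∑ v ∈ V, (X - C (v : ℚ)).natDegree
          = ∑ _v ∈ V, 1 :=
            Finset.sum_congr rfl fun v _ => Polynomial.natDegree_X_sub_C _
        _ = V.card := by simp
    omega
  have key : ∑ i, P.eval ((a i : ℚ)) / (K i : ℚ) = 0 := by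
    calc ∑ i, P.eval ((a i : ℚ)) / (K i : ℚ)
        = ∑ i, ∑ t ∈ Finset.range n, P.coeff t * (a i : ℚ) ^ t / (K i : ℚ) := by
          refine Finset.sum_congr rfl fun i _ => ?_
          rw [Polynomial.eval_eq_sum_range' hdeg, Finset.sum_div]
      _ = ∑ t ∈ Finset.range n, P.coeff t * ∑ i, (a i : ℚ) ^ t / (K i : ℚ) := by
          rw [Finset.sum_comm]
          refine Finset.sum_congr rfl fun t _ => ?_
          rw [Finset.mul_sum]
          refine Finset.sum_congr rfl fun i _ => ?_
          ring
      _ = 0 := by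
          refine Finset.sum_eq_zero fun t ht => ?_
          rw [h t (by simp at ht; omega), mul_zero]
  have hzero : ∀ i, i ≠ i₀ → P.eval ((a i : ℚ)) / (K i : ℚ) = 0 := by
    intro i hi
    have hmem : a i ∈ V := by
      refine Finset.mem_erase.mpr ⟨?_, Finset.mem_image.mpr ⟨i, Finset.mem_univ _, rfl⟩⟩
      intro hcon
      exact hi (huniq i hcon)
    have : P.eval ((a i : ℚ)) = 0 := by
      rw [hP, Polynomial.eval_prod]
      apply Finset.prod_eq_zero hmem
      simp
    rw [this, zero_div]
  have hsingle : ∑ i, P.eval ((a i : ℚ)) / (K i : ℚ) = P.eval ((s : ℚ)) / (K i₀ : ℚ) := by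
    rw [Finset.sum_eq_single i₀]
    · rw [hai₀]
    · intro i _ hi; exact hzero i hi
    · intro hcon; exact absurd (Finset.mem_univ i₀) hcon
  have hKQ : (K i₀ : ℚ) ≠ 0 := Int.cast_ne_zero.mpr (hK i₀)
  have hPs : P.eval ((s : ℚ)) = 0 := by
    have heq : P.eval ((s : ℚ)) / (K i₀ : ℚ) = 0 := hsingle ▸ key
    exact (div_eq_zero_iff.mp heq).resolve_right hKQ
  rw [hP, Polynomial.eval_prod, Finset.prod_eq_zero_iff] at hPs
  obtain ⟨v, hvV, hv⟩ := hPs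
  simp only [Polynomial.eval_sub, Polynomial.eval_X, Polynomial.eval_C, sub_eq_zero] at hv
  have : s = v := by exact_mod_cast hv
  exact (Finset.mem_erase.mp hvV).1 this.symm
end

section
/- Let n be odd, and suppose Td ∈ ℚ[x₁,…,x_n] symmetric is the Todd polynomial in n variables. If c₁ = Σ x_i is sent to 0 (i.e. c₁ is torsion), then the degree-n component of the Todd class, as a polynomial in the elementary symmetric functions, is divisible by e₁ = c₁; hence Td_n vanishes when c₁ = 0. -/
/-! With `B(t) = t eᵗ / (eᵗ - 1) = ∑ bernoulli' k tᵏ / k!`, the value of `Td` at a point `a` is the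
coefficient of `tⁿ` in `∏ i, B(aᵢ t)`. Since `B(-t) = B(t) e⁻ᵗ`, this product is an even series
whenever `∑ i, aᵢ = 0`, so for odd `n` the polynomial `Td` vanishes on the hyperplane `c₁ = 0`.
Viewed as a polynomial in `x₀` over the other variables, it then has the root `-(x₁ + ⋯ + xₙ₋₁)`,
hence is divisible by `c₁`. -/

open Finset MvPolynomial

namespace PowerSeries

variable {A : Type*} [CommRing A]

theorem coeff_evalNegHom (n : ℕ) (f : PowerSeries A) :
    coeff n (evalNegHom f) = (-1) ^ n * coeff n f :=
  coeff_rescale f (-1) n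

theorem evalNegHom_rescale (a : A) (f : PowerSeries A) :
    evalNegHom (rescale a f) = rescale a (evalNegHom f) := by
  simp only [evalNegHom, rescale_rescale, mul_comm]

variable [Algebra ℚ A]

theorem coeff_eq_zero_of_evalNegHom_eq_self {n : ℕ} (hn : Odd n)
    {f : PowerSeries A} (hf : evalNegHom f = f) : coeff n f = 0 := by
  have h := coeff_evalNegHom n f
  rw [hf, hn.neg_one_pow, neg_one_mul, eq_neg_iff_add_eq_zero] at h
  have : (2 : ℚ) • coeff n f = 0 := by rw [two_smul, h]
  simpa using this

theorem prod_rescale_exp {ι : Type*} (s : Finset ι) (a : ι → A) :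
    ∏ i ∈ s, rescale (a i) (exp A) = rescale (∑ i ∈ s, a i) (exp A) := by
  induction s using Finset.cons_induction with
  | empty => simp [constantCoeff_exp]
  | cons i s hi ih => rw [prod_cons, sum_cons, ih, exp_mul_exp_eq_exp_add]

theorem evalNegHom_bernoulli'PowerSeries :
    evalNegHom (bernoulli'PowerSeries A) = bernoulliPowerSeries A := by
  ext n
  simp [coeff_evalNegHom, bernoulli'PowerSeries, bernoulliPowerSeries, bernoulli, mul_div_assoc]

theorem exp_sub_one_ne_zero [Nontrivial A] : exp A - 1 ≠ 0 := by
  intro h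
  simpa [coeff_exp] using congrArg (coeff 1) h

theorem bernoulliPowerSeries_eq_bernoulli'PowerSeries_mul [IsDomain A] :
    bernoulliPowerSeries A = bernoulli'PowerSeries A * evalNegHom (exp A) := by
  refine mul_right_cancel₀ exp_sub_one_ne_zero ?_
  rw [bernoulliPowerSeries_mul_exp_sub_one, mul_right_comm, bernoulli'PowerSeries_mul_exp_sub_one,
    mul_assoc, exp_mul_exp_neg_eq_one, mul_one]

theorem evalNegHom_prod_rescale_bernoulli'PowerSeries [IsDomain A] {ι : Type*} (s : Finset ι)
    (a : ι → A) (ha : ∑ i ∈ s, a i = 0) :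
    evalNegHom (∏ i ∈ s, rescale (a i) (bernoulli'PowerSeries A))
      = ∏ i ∈ s, rescale (a i) (bernoulli'PowerSeries A) := by
  have hexp : ∏ i ∈ s, rescale (a i) (evalNegHom (exp A)) = 1 := by
    simp only [evalNegHom, rescale_rescale, prod_rescale_exp, ← mul_sum, ha, mul_zero,
      rescale_zero_apply, constantCoeff_exp, map_one]
  simp only [map_prod, evalNegHom_rescale, evalNegHom_bernoulli'PowerSeries,
    bernoulliPowerSeries_eq_bernoulli'PowerSeries_mul, map_mul, prod_mul_distrib, hexp, mul_one]

end PowerSeries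

namespace MvPolynomial

theorem eval_eq_coeff_prod_rescale {R σ : Type*} [CommRing R] [Fintype σ]
    {n : ℕ} (f : PowerSeries R) {p : MvPolynomial σ R}
    (hp : ∀ d : σ →₀ ℕ, coeff d p = if ∑ i, d i = n then ∏ i, PowerSeries.coeff (d i) f else 0)
    (a : σ → R) :
    eval a p = PowerSeries.coeff n (∏ i, PowerSeries.rescale (a i) f) := by
  classical
  have hsupp : p.support ⊆ finsuppAntidiag univ n := fun d hd => by
    refine mem_finsuppAntidiag.mpr ⟨?_, subset_univ _⟩
    by_contra h
    exact mem_support_iff.mp hd (by rw [hp, if_neg h])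
  rw [PowerSeries.coeff_prod, eval_eq', sum_subset hsupp fun d _ hd => by
    rw [notMem_support_iff.mp hd, zero_mul]]
  refine sum_congr rfl fun d hd => ?_
  rw [hp, if_pos (mem_finsuppAntidiag.mp hd).1, ← prod_mul_distrib]
  simp only [PowerSeries.coeff_rescale, mul_comm]

theorem sum_X_dvd_of_eval_eq_zero {R : Type*} [CommRing R] [IsDomain R] [Infinite R] {m : ℕ}
    {p : MvPolynomial (Fin (m + 1)) R} (hp : ∀ a : Fin (m + 1) → R, ∑ i, a i = 0 → eval a p = 0) :
    (∑ i, X i) ∣ p := by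
  set e := finSuccEquiv R m
  set c : MvPolynomial (Fin m) R := ∑ i, X i
  have he : e (∑ i, X i) = Polynomial.X - Polynomial.C (-c) := by
    simp [e, c, Fin.sum_univ_succ, finSuccEquiv_X_zero, finSuccEquiv_X_succ]
  have hroot : (e p).IsRoot (-c) := by
    refine MvPolynomial.funext fun y => ?_
    have hcons : eval y (Polynomial.eval (-c) (e p)) = eval (Fin.cons (eval y (-c)) y) p := by
      rw [eval_eq_eval_mv_eval', Polynomial.eval_map, Polynomial.eval₂_at_apply]
    rw [map_zero, hcons]
    exact hp _ (by simp [c, Fin.sum_univ_succ])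
  rw [← map_dvd_iff e, he, Polynomial.dvd_iff_isRoot]
  exact hroot

end MvPolynomial

/-- The degree-`n` homogeneous component of the Todd class
`∏ i, x i / (1 - exp (- x i))`, as a polynomial in the variables `x i`:
its coefficient at a monomial `d` of total degree `n` is
`∏ i, bernoulli' (d i) / (d i)!`, and all other coefficients vanish. -/
theorem stmt15 (n : ℕ) (hn : Odd n) (Td : MvPolynomial (Fin n) ℚ)
    (hTd : ∀ d : Fin n →₀ ℕ,
      MvPolynomial.coeff d Td =
        if (d.sum fun _ k => k) = n then
          ∏ i, bernoulli' (d i) / ((Nat.factorial (d i)) : ℚ)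
        else 0) :
    Td ∈ Ideal.span ({∑ i, (X i : MvPolynomial (Fin n) ℚ)} : Set (MvPolynomial (Fin n) ℚ)) := by
  have hTd' : ∀ d : Fin n →₀ ℕ, coeff d Td =
      if ∑ i, d i = n then ∏ i, PowerSeries.coeff (d i) (bernoulli'PowerSeries ℚ) else 0 := by
    simpa [Finsupp.sum_fintype, bernoulli'PowerSeries] using hTd
  obtain ⟨m, rfl⟩ := Nat.exists_eq_add_one_of_ne_zero hn.pos.ne'
  refine Ideal.mem_span_singleton.mpr (sum_X_dvd_of_eval_eq_zero fun a ha => ?_)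
  rw [eval_eq_coeff_prod_rescale _ hTd']
  exact PowerSeries.coeff_eq_zero_of_evalNegHom_eq_self hn
    (PowerSeries.evalNegHom_prod_rescale_bernoulli'PowerSeries _ a ha)
end
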